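/- Let n ≥ 2 be an integer and set λ₊(n) = (3/(n+2))·(1 − √((n−1)/(3(n+1)))). Then for all λ with 1/(n+1) ≤ λ ≤ λ₊(n), the sequence q_0(n,λ) ≤ q_1(n,λ) ≤ … ≤ q_{n+1}(n,λ) is nondecreasing (i.e. q(n,λ) is already sorted in ascending order). -/
import Mathlib


/-- The output distribution `p(n,λ)` of the general attenuator with Fock environment `|n⟩`,
for `ℓ = 0, …, n+1` (the case `ℓ = n+1` is the continuous extension of the formula
`… · λ^(n-ℓ) · …`, which involves `λ⁻¹`, valid for all `λ ∈ (0,1)`). -/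
noncomputable def pdist (n ℓ : ℕ) (t : ℝ) : ℝ :=
  if ℓ ≤ n then
    1 / (2 * ((n : ℝ) + 1) * (1 - t)) * ((n + 1).choose ℓ : ℝ) * (1 - t) ^ ℓ * t ^ (n - ℓ) *
      ((1 - t) * ((n : ℝ) - (ℓ : ℝ) + 1) + (((n : ℝ) + 1) * (1 - t) - (ℓ : ℝ)) ^ 2)
  else ((n : ℝ) + 1) * t * (1 - t) ^ n / 2

/-- The output distribution `q(n,λ)` (spectrum of the joint output state). -/
noncomputable def qdist (n ℓ : ℕ) (t : ℝ) : ℝ :=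
  if ℓ ≤ n then
    1 / (2 * ((n : ℝ) + 1) * (1 - t)) * ((n + 1).choose ℓ : ℝ) * (1 - t) ^ ℓ * t ^ (n - ℓ) *
      (t * (ℓ : ℝ) + (((n : ℝ) + 1) * (1 - t) - (ℓ : ℝ)) ^ 2)
  else (1 - t) ^ n * (1 + ((n : ℝ) + 1) * t) / 2

/-- The threshold . -/
noncomputable def lamPlus (n : ℕ) : ℝ :=
  3 / ((n : ℝ) + 2) * (1 - Real.sqrt (((n : ℝ) - 1) / (3 * ((n : ℝ) + 1))))

set_option maxHeartbeats 1000000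

lemma qdist_aux (c1 c2 L M t F0 F1 K : ℝ) (hK : 0 ≤ K) (hL : 0 ≤ L)
    (hcc : c2 * (L + 1) = c1 * M) (hc1 : 0 ≤ c1) (ht : 0 ≤ t)
    (hkey : (L + 1) * t * F0 ≤ M * (1 - t) * F1) :
    K * (c1 * t * F0) ≤ K * (c2 * (1 - t) * F1) := by
  have h7 := mul_le_mul_of_nonneg_left hkey hc1
  have h8 : c1 * t * F0 * (L + 1) ≤ c2 * (1 - t) * F1 * (L + 1) := by
    calc c1 * t * F0 * (L + 1) = c1 * ((L + 1) * t * F0) := by ring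
      _ ≤ c1 * (M * (1 - t) * F1) := h7
      _ = c2 * (1 - t) * F1 * (L + 1) := by linear_combination ((t - 1) * F1) * hcc
  exact mul_le_mul_of_nonneg_left (le_of_mul_le_mul_right h8 (by linarith)) hK

theorem qdist_sorted (n : ℕ) (hn : 2 ≤ n) (t : ℝ)
    (h1 : 1 / ((n : ℝ) + 1) ≤ t) (h2 : t ≤ lamPlus n) :
    ∀ ℓ ≤ n, qdist n ℓ t ≤ qdist n (ℓ + 1) t := by
  intro ℓ hℓ
  have hn2 : (2:ℝ) ≤ (n:ℝ) := by exact_mod_cast hn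
  set r := Real.sqrt (((n : ℝ) - 1) / (3 * ((n : ℝ) + 1))) with hr
  have hr0 : 0 ≤ r := Real.sqrt_nonneg _
  have hrsq : r ^ 2 = ((n : ℝ) - 1) / (3 * ((n : ℝ) + 1)) := by
    rw [hr, Real.sq_sqrt (div_nonneg (by linarith) (by linarith))]
  have hrlb : (n:ℝ) / (2 * ((n:ℝ) + 1)) ≤ r := by
    have hbsq : ((n:ℝ) / (2 * ((n:ℝ) + 1))) ^ 2 ≤ r ^ 2 := by
      rw [hrsq, div_pow, div_le_div_iff₀ (by positivity) (by positivity)]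
      nlinarith [sq_nonneg ((n:ℝ) - 2)]
    nlinarith [div_nonneg (by linarith : (0:ℝ) ≤ (n:ℝ)) (by linarith : (0:ℝ) ≤ 2*((n:ℝ)+1))]
  have h2' : t ≤ 3 / ((n : ℝ) + 2) * (1 - r) := h2
  have h3 : ((n:ℝ)+2)*t ≤ 3*(1-r) := by
    rw [div_mul_eq_mul_div, le_div_iff₀ (by linarith)] at h2'
    linarith
  have hrlb' : (n:ℝ) ≤ r * (2 * ((n:ℝ) + 1)) := by
    rw [div_le_iff₀ (by positivity)] at hrlb; linarith
  have ht2 : 2 * ((n:ℝ)+1) * t ≤ 3 := by nlinarith [h3, hrlb']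
  have ht0 : 0 < t := lt_of_lt_of_le (by positivity) h1
  have hs : 0 < 1 - t := by nlinarith
  have ha1 : 1 ≤ ((n:ℝ) + 1) * t := by
    rw [div_le_iff₀ (by linarith)] at h1; linarith
  have ha2 : ((n:ℝ) + 1) * t ≤ 3/2 := by linarith
  have hK : 0 ≤ ((n:ℝ) + 1) * ((n:ℝ) + 2) * t^2 - 6 * ((n:ℝ) + 1) * t + 6 := by
    have h4 : 0 ≤ 3 - ((n:ℝ)+2)*t := by linarith
    have h6 : (3*r)^2 ≤ (3 - ((n:ℝ)+2)*t)^2 := by nlinarith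
    have h5 : 3*((n:ℝ)-1) ≤ ((n:ℝ)+1) * (3 - ((n:ℝ)+2)*t)^2 := by
      have he : (3:ℝ)*((n:ℝ)-1) = ((n:ℝ)+1) * (9 * (((n:ℝ)-1)/(3*((n:ℝ)+1)))) := by
        field_simp; ring
      rw [he]
      have h9 : (3*r)^2 = 9 * (((n:ℝ)-1)/(3*((n:ℝ)+1))) := by rw [mul_pow, hrsq]; ring
      nlinarith [h6]
    nlinarith [h5]
  rcases eq_or_lt_of_le hℓ with hln | hln
  · -- case ℓ = n
    subst hln
    rw [qdist, qdist, if_pos le_rfl, if_neg (by omega)]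
    rw [Nat.sub_self, pow_zero, Nat.choose_succ_self_right]
    push_cast
    have key : t * (ℓ:ℝ) + (((ℓ:ℝ) + 1) * (1 - t) - (ℓ:ℝ)) ^ 2 ≤ (1 - t) * (1 + ((ℓ:ℝ) + 1) * t) := by
      have hnt : 0 ≤ ((ℓ:ℝ) - 2) * t := mul_nonneg (by linarith) ht0.le
      have h2nt : 0 ≤ 2 - ((ℓ:ℝ) + 2) * t := by nlinarith [ht2, hnt]
      nlinarith [mul_nonneg (mul_nonneg (by linarith : (0:ℝ) ≤ (ℓ:ℝ)+1) ht0.le) h2nt]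
    have h1t : (1 - t) ≠ 0 := ne_of_gt hs
    have hℓ1 : ((ℓ:ℝ) + 1) ≠ 0 := by positivity
    have hfac : (0:ℝ) ≤ (1 - t)^ℓ / (2 * (1 - t)) :=
      div_nonneg (pow_nonneg hs.le ℓ) (by linarith)
    calc 1 / (2 * ((ℓ:ℝ) + 1) * (1 - t)) * ((ℓ:ℝ) + 1) * (1 - t) ^ ℓ * 1 *
          (t * (ℓ:ℝ) + (((ℓ:ℝ) + 1) * (1 - t) - (ℓ:ℝ)) ^ 2)
        = (1 - t)^ℓ / (2 * (1 - t)) * (t * (ℓ:ℝ) + (((ℓ:ℝ) + 1) * (1 - t) - (ℓ:ℝ)) ^ 2) := by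
          field_simp
      _ ≤ (1 - t)^ℓ / (2 * (1 - t)) * ((1 - t) * (1 + ((ℓ:ℝ) + 1) * t)) :=
          mul_le_mul_of_nonneg_left key hfac
      _ = (1 - t) ^ ℓ * (1 + ((ℓ:ℝ) + 1) * t) / 2 := by field_simp
  · -- case ℓ < n
    rw [qdist, qdist, if_pos hℓ, if_pos (by omega)]
    push_cast
    set y := ((n:ℝ) + 1) * (1 - t) - (ℓ:ℝ) with hydef
    have hkey : ((ℓ:ℝ) + 1) * t * (t * (ℓ:ℝ) + (((n:ℝ) + 1) * (1 - t) - (ℓ:ℝ)) ^ 2) ≤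
        ((n:ℝ) + 1 - (ℓ:ℝ)) * (1 - t) *
          (t * ((ℓ:ℝ) + 1) + (((n:ℝ) + 1) * (1 - t) - ((ℓ:ℝ) + 1)) ^ 2) := by
      have hfac : ((n:ℝ) + 1 - (ℓ:ℝ)) * (1 - t) *
            (t * ((ℓ:ℝ) + 1) + (((n:ℝ) + 1) * (1 - t) - ((ℓ:ℝ) + 1)) ^ 2) -
          ((ℓ:ℝ) + 1) * t * (t * (ℓ:ℝ) + (((n:ℝ) + 1) * (1 - t) - (ℓ:ℝ)) ^ 2) =
          (y - 1) * (y^2 - y - ((n:ℝ) + 1) * t * (1 - t)) := by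
        rw [hydef]; ring
      have hcases : ℓ + 1 = n ∨ ℓ + 2 = n ∨ ℓ + 3 ≤ n := by omega
      have hprod : 0 ≤ (y - 1) * (y^2 - y - ((n:ℝ) + 1) * t * (1 - t)) := by
        rcases hcases with hc | hc | hc
        · -- ℓ = n - 1
          have hL : (ℓ:ℝ) = (n:ℝ) - 1 := by
            have : ((ℓ:ℝ) + 1) = (n:ℝ) := by exact_mod_cast congrArg (Nat.cast : ℕ → ℝ) hc
            linarith
          have hy : y = 2 - ((n:ℝ) + 1) * t := by rw [hydef, hL]; ring
          have hy1 : y ≤ 1 := by rw [hy]; linarith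
          have hy0 : 0 ≤ y := by rw [hy]; linarith
          have hcpos : 0 < ((n:ℝ) + 1) * t * (1 - t) := by positivity
          nlinarith [mul_nonneg hy0 (by linarith : (0:ℝ) ≤ 1 - y)]
        · -- ℓ = n - 2
          have hL : (ℓ:ℝ) = (n:ℝ) - 2 := by
            have : ((ℓ:ℝ) + 2) = (n:ℝ) := by exact_mod_cast congrArg (Nat.cast : ℕ → ℝ) hc
            linarith
          have hy : y = 3 - ((n:ℝ) + 1) * t := by rw [hydef, hL]; ring
          have hq : 0 ≤ y^2 - y - ((n:ℝ) + 1) * t * (1 - t) := by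
            rw [hy]; nlinarith [hK]
          have hy1 : 1 ≤ y := by rw [hy]; linarith
          exact mul_nonneg (by linarith) hq
        · -- ℓ ≤ n - 3
          have hL : (ℓ:ℝ) + 3 ≤ (n:ℝ) := by exact_mod_cast Nat.cast_le.mpr hc
          have hy : 5/2 ≤ y := by rw [hydef]; nlinarith
          have hc32 : ((n:ℝ) + 1) * t * (1 - t) ≤ 3/2 := by
            nlinarith [mul_nonneg (mul_nonneg (by linarith : (0:ℝ) ≤ (n:ℝ)+1) ht0.le) ht0.le]
          have hq : 0 ≤ y^2 - y - ((n:ℝ) + 1) * t * (1 - t) := by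
            nlinarith [sq_nonneg (y - 5/2)]
          exact mul_nonneg (by linarith) hq
      linarith [hfac, hprod]
    have hcc : (((n + 1).choose (ℓ + 1) : ℕ) : ℝ) * ((ℓ:ℝ) + 1) =
        (((n + 1).choose ℓ : ℕ) : ℝ) * ((n:ℝ) + 1 - (ℓ:ℝ)) := by
      have hcn := Nat.choose_succ_right_eq (n + 1) ℓ
      have hcast := congrArg (Nat.cast : ℕ → ℝ) hcn
      push_cast [Nat.cast_sub (show ℓ ≤ n + 1 by omega)] at hcast
      linarith [hcast]
    have hpow2 : t ^ (n - ℓ) = t ^ (n - (ℓ + 1)) * t := by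
      rw [← pow_succ]; congr 1; omega
    have hKpos : (0:ℝ) ≤ 1 / (2 * ((n:ℝ) + 1) * (1 - t)) * (1 - t) ^ ℓ * t ^ (n - (ℓ + 1)) := by
      have h2s : (0:ℝ) < 2 * ((n:ℝ) + 1) * (1 - t) := by positivity
      exact mul_nonneg (mul_nonneg (by positivity) (pow_nonneg hs.le ℓ)) (pow_nonneg ht0.le _)
    calc 1 / (2 * ((n:ℝ) + 1) * (1 - t)) * (((n + 1).choose ℓ : ℕ) : ℝ) * (1 - t) ^ ℓ *
          t ^ (n - ℓ) * (t * (ℓ:ℝ) + (((n:ℝ) + 1) * (1 - t) - (ℓ:ℝ)) ^ 2)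
        = (1 / (2 * ((n:ℝ) + 1) * (1 - t)) * (1 - t) ^ ℓ * t ^ (n - (ℓ + 1))) *
            ((((n + 1).choose ℓ : ℕ) : ℝ) * t *
              (t * (ℓ:ℝ) + (((n:ℝ) + 1) * (1 - t) - (ℓ:ℝ)) ^ 2)) := by
          rw [hpow2]; ring
      _ ≤ (1 / (2 * ((n:ℝ) + 1) * (1 - t)) * (1 - t) ^ ℓ * t ^ (n - (ℓ + 1))) *
            ((((n + 1).choose (ℓ + 1) : ℕ) : ℝ) * (1 - t) *
              (t * ((ℓ:ℝ) + 1) + (((n:ℝ) + 1) * (1 - t) - ((ℓ:ℝ) + 1)) ^ 2)) :=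
          qdist_aux _ _ _ _ _ _ _ _ hKpos (by positivity) hcc (by positivity) ht0.le hkey
      _ = 1 / (2 * ((n:ℝ) + 1) * (1 - t)) * (((n + 1).choose (ℓ + 1) : ℕ) : ℝ) *
            (1 - t) ^ (ℓ + 1) * t ^ (n - (ℓ + 1)) *
            (t * ((ℓ:ℝ) + 1) + (((n:ℝ) + 1) * (1 - t) - ((ℓ:ℝ) + 1)) ^ 2) := by
          rw [pow_succ]; ring
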